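/- Let E be a real Banach space, 𝓚 ⊆ E nonempty closed convex, and U ⊆ 𝓚 bounded and relatively open in 𝓚 with boundary ∂U in 𝓚. Let A be a linear operator with domain D(A) ⊆ E whose graph is closed, and let (J_h)_{0<h≤h*, hω<1} be a family of compact continuous linear operators on E such that for each admissible h: J_h x ∈ D(A) and J_h x − h•A(J_h x) = x for all x ∈ E, J_h(y − h•Ay) = y for all y ∈ D(A), J_h(𝓚) ⊆ 𝓚, and ‖J_h‖ ≤ M/(1 − hω), where M ≥ 1, ω ∈ ℝ. Let r : E → 𝓚 be a continuous retraction with ‖z − r(z)‖ ≤ 2 d(z, 𝓚) for all z ∈ E. Let α > 0, let G : 𝓚 → (subsets of E) map bounded sets onto bounded sets, and let g : 𝓚 → E be continuous, tangent to 𝓚 (g(x) ∈ T_𝓚(x) for all x), and an α-approximation of G: for every x ∈ 𝓚 there are x' ∈ 𝓚 with ‖x' − x‖ < α, y ∈ G(x') and ξ ∈ E with ‖ξ‖ < α such that g(x) = y + ξ. Assume that Ax + y + ξ ≠ 0 for all x ∈ D(A) ∩ ∂U, x' ∈ 𝓚 with ‖x' − x‖ < α, y ∈ G(x') and ξ with ‖ξ‖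 < α. Then there exists h₀ ∈ (0, h*] with h₀ω < 1 such that for every h ∈ (0, h₀] and every x ∈ ∂U, x ≠ r(J_h(x + h•g(x))). -/

import Mathlib

/-!
Argue by contradiction: take `hₙ → 0` and boundary points `xₙ = r(zₙ)` with
`zₙ = J_{hₙ}(xₙ + hₙ g(xₙ))`. Since `J_{hₙ}` preserves `𝓚`, `‖zₙ - xₙ‖ ≤ 4M d(xₙ + hₙ g(xₙ), 𝓚)`,
and by the resolvent identity `A zₙ = hₙ⁻¹ (zₙ - xₙ) - g(xₙ)`, which is bounded. Writing
`zₙ = J_τ(zₙ - τ A zₙ)` for a fixed `τ`, compactness of `J_τ` gives a subsequence `zₙ → a`, and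
then `xₙ → a` with `a ∈ ∂U`. Tangency of `g` and convexity of `𝓚` make
`d(xₙ + hₙ g(xₙ), 𝓚) = o(hₙ)`, so `A zₙ → -g(a)`; as `A` is closed, `A a + g(a) = 0`, which the
approximation property of `g` turns into a forbidden zero of `A + G + ξ`.
-/

open Metric Set Filter Topology

open scoped NNReal

theorem LipschitzWith.infDist_map_le {α β : Type*} [PseudoMetricSpace α] [PseudoMetricSpace β]
    {f : α → β} {L : ℝ≥0} (hf : LipschitzWith L f) {s : Set α} {t : Set β} (hs : s.Nonempty)
    (hst : MapsTo f s t) (x : α) : infDist (f x) t ≤ L * infDist x s := by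
  have := hs.to_subtype
  rw [infDist_eq_iInf (s := s), Real.mul_iInf_of_nonneg L.coe_nonneg]
  exact le_ciInf fun y => (infDist_le_dist_of_mem (hst y.2)).trans (hf.dist_le_mul x y)

theorem LinearPMap.IsClosed.exists_apply_eq_of_tendsto {R E F ι : Type*} [CommRing R]
    [AddCommGroup E] [AddCommGroup F] [Module R E] [Module R F] [TopologicalSpace E]
    [TopologicalSpace F] {A : E →ₗ.[R] F} (hA : A.IsClosed) {l : Filter ι} [l.NeBot]
    {f : ι → A.domain} {a : E} {b : F} (hf : Tendsto (fun i => (f i : E)) l (𝓝 a))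
    (hAf : Tendsto (fun i => A (f i)) l (𝓝 b)) : ∃ ha : a ∈ A.domain, A ⟨a, ha⟩ = b := by
  have hab : (a, b) ∈ (A.graph : Set (E × F)) :=
    hA.mem_of_tendsto (hf.prodMk_nhds hAf) (Eventually.of_forall fun i => A.mem_graph (f i))
  obtain ⟨y, rfl, rfl⟩ := (A.mem_graph_iff).1 hab
  exact ⟨y.2, rfl⟩

theorem isClosed_closure_inter_diff {X : Type*} [TopologicalSpace X] {K U V : Set X}
    (hK : IsClosed K) (hV : IsOpen V) (hUV : U = V ∩ K) : IsClosed ((closure U ∩ K) \ U) := by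
  have : (closure U ∩ K) \ U = (closure U ∩ K) ∩ Vᶜ := by
    ext x
    simp only [hUV, Set.mem_sdiff, mem_inter_iff, mem_compl_iff]
    tauto
  rw [this]
  exact (isClosed_closure.inter hK).inter hV.isClosed_compl

theorem exists_pos_forall_mul_le_half {a : ℝ} (ha : 0 < a) (ω : ℝ) :
    ∃ τ, 0 < τ ∧ τ ≤ a ∧ ∀ h, 0 < h → h ≤ τ → h * ω ≤ 1 / 2 := by
  refine ⟨min a (2 * (|ω| + 1))⁻¹, by positivity, min_le_left _ _, fun h hh hτ => ?_⟩
  have hh' : h * (2 * (|ω| + 1)) ≤ 1 := by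
    rw [← le_div_iff₀ (by positivity), one_div]
    exact hτ.trans (min_le_right _ _)
  nlinarith [le_abs_self ω, abs_nonneg ω]

theorem div_one_sub_le_two_mul {M t : ℝ} (hM : 0 ≤ M) (ht : t ≤ 1 / 2) : M / (1 - t) ≤ 2 * M := by
  rw [div_le_iff₀ (by linarith)]
  nlinarith

theorem exists_seq_tendsto_zero_of_forall_exists_le {P : ℝ → Prop} {τ : ℝ} (hτ : 0 < τ)
    (hP : ∀ h₀, 0 < h₀ → h₀ ≤ τ → ∃ h, 0 < h ∧ h ≤ h₀ ∧ P h) :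
    ∃ h : ℕ → ℝ, (∀ n, 0 < h n ∧ h n ≤ τ ∧ P (h n)) ∧ Tendsto h atTop (𝓝 0) := by
  have hτn : ∀ n : ℕ, τ / (n + 1) ≤ τ := fun n =>
    div_le_self hτ.le (by linarith [n.cast_nonneg (α := ℝ)])
  choose h hh hhn hPh using fun n : ℕ => hP (τ / (n + 1)) (by positivity) (hτn n)
  refine ⟨h, fun n => ⟨hh n, (hhn n).trans (hτn n), hPh n⟩, ?_⟩
  refine squeeze_zero (fun n => (hh n).le) hhn ?_
  simpa [Function.comp_def] using
    (tendsto_const_div_atTop_nhds_zero_nat τ).comp (tendsto_add_atTop_nat 1)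

theorem exists_norm_le_of_approx {E : Type*} [SeminormedAddCommGroup E] {K B : Set E}
    {G : E → Set E} {g : E → E} {α : ℝ}
    (hG : ∀ B : Set E, B ⊆ K → Bornology.IsBounded B → Bornology.IsBounded (⋃ x ∈ B, G x))
    (hg : ∀ x ∈ K, ∃ x' ∈ K, ‖x' - x‖ < α ∧ ∃ y ∈ G x', ∃ ξ : E, ‖ξ‖ < α ∧ g x = y + ξ)
    (hBK : B ⊆ K) (hB : Bornology.IsBounded B) : ∃ C, ∀ x ∈ B, ‖g x‖ ≤ C := by
  have hBα : Bornology.IsBounded (K ∩ thickening α B) :=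
    hB.thickening.subset inter_subset_right
  obtain ⟨R, hR⟩ := isBounded_iff_forall_norm_le.1 (hG _ inter_subset_left hBα)
  refine ⟨R + α, fun x hx => ?_⟩
  obtain ⟨x', hx'K, hx'x, y, hy, ξ, hξ, hgx⟩ := hg x (hBK hx)
  have hx' : x' ∈ K ∩ thickening α B :=
    ⟨hx'K, mem_thickening_iff.2 ⟨x, hx, by rwa [dist_eq_norm]⟩⟩
  rw [hgx]
  exact (norm_add_le y ξ).trans (add_le_add (hR y (mem_biUnion hx' hy)) hξ.le)

section Tangency

variable {E : Type*} [NormedAddCommGroup E] [NormedSpace ℝ E]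

def convexTangentCone (K : Set E) (x : E) : Set E :=
  closure (⋃ h ∈ Ioi (0 : ℝ), (fun k => h⁻¹ • (k - x)) '' K)

theorem infDist_add_smul_le_of_mem {K : Set E} {x : E} (hx : x ∈ K) {h : ℝ} (hh : 0 ≤ h)
    (u : E) : infDist (x + h • u) K ≤ h * ‖u‖ := by
  refine (infDist_le_dist_of_mem hx).trans_eq ?_
  rw [dist_eq_norm, add_sub_cancel_left, norm_smul, Real.norm_of_nonneg hh]

theorem Convex.infDist_add_smul_le {K : Set E} (hK : Convex ℝ K) {x k : E} (hx : x ∈ K)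
    (hk : k ∈ K) {h s : ℝ} (hh : 0 ≤ h) (hhs : h ≤ s) (u : E) :
    infDist (x + h • u) K ≤ h * ‖u - s⁻¹ • (k - x)‖ := by
  have hmem : (1 - h / s) • x + (h / s) • k ∈ K :=
    hK hx hk (by linarith [div_le_one_of_le₀ hhs (hh.trans hhs)]) (div_nonneg hh (hh.trans hhs))
      (by ring)
  have hdiff : x + h • u - ((1 - h / s) • x + (h / s) • k) = h • (u - s⁻¹ • (k - x)) := by
    simp only [smul_sub, sub_smul, one_smul, smul_smul, div_eq_mul_inv]
    module
  calc infDist (x + h • u) K ≤ ‖x + h • u - ((1 - h / s) • x + (h / s) • k)‖ :=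
        (infDist_le_dist_of_mem hmem).trans_eq (dist_eq_norm _ _)
    _ = h * ‖u - s⁻¹ • (k - x)‖ := by rw [hdiff, norm_smul, Real.norm_of_nonneg hh]

theorem Convex.tendsto_inv_mul_infDist_add_smul {K : Set E} (hK : Convex ℝ K) {z v : E}
    (hv : v ∈ convexTangentCone K z) {ι : Type*} {l : Filter ι} {x u : ι → E} {h : ι → ℝ}
    (hxK : ∀ i, x i ∈ K) (hx : Tendsto x l (𝓝 z)) (hh : ∀ i, 0 < h i)
    (hh0 : Tendsto h l (𝓝 0)) (hu : Tendsto u l (𝓝 v)) :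
    Tendsto (fun i => (h i)⁻¹ * infDist (x i + h i • u i) K) l (𝓝 0) := by
  rw [Metric.tendsto_nhds]
  intro ε hε
  obtain ⟨p, hp, hvp⟩ := Metric.mem_closure_iff.1 hv (ε / 4) (by positivity)
  simp only [mem_iUnion, mem_image, mem_Ioi] at hp
  obtain ⟨s, hs, k, hk, rfl⟩ := hp
  filter_upwards [hh0.eventually (eventually_le_nhds hs),
    hx.eventually (ball_mem_nhds z (by positivity : 0 < s * (ε / 4))),
    hu.eventually (ball_mem_nhds v (by positivity : 0 < ε / 4))] with i hhs hxi hui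
  rw [dist_eq_norm] at hxi hui hvp
  have hsplit : u i - s⁻¹ • (k - x i) = (u i - v) + (v - s⁻¹ • (k - z)) + s⁻¹ • (x i - z) := by
    module
  have hxs : ‖s⁻¹ • (x i - z)‖ < ε / 4 := by
    rw [norm_smul, Real.norm_of_nonneg (inv_nonneg.2 hs.le), inv_mul_lt_iff₀ hs]
    exact hxi
  have hbound : ‖u i - s⁻¹ • (k - x i)‖ < 3 * (ε / 4) := by
    rw [hsplit]
    linarith [norm_add₃_le (a := u i - v) (b := v - s⁻¹ • (k - z)) (c := s⁻¹ • (x i - z))]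
  have hnonneg : 0 ≤ (h i)⁻¹ * infDist (x i + h i • u i) K :=
    mul_nonneg (inv_nonneg.2 (hh i).le) infDist_nonneg
  have hle : (h i)⁻¹ * infDist (x i + h i • u i) K ≤ ‖u i - s⁻¹ • (k - x i)‖ := by
    rw [inv_mul_le_iff₀ (hh i)]
    exact hK.infDist_add_smul_le (hxK i) hk (hh i).le hhs _
  rw [Real.dist_0_eq_abs, abs_of_nonneg hnonneg]
  linarith

end Tangency

theorem LinearPMap.apply_eq_inv_smul_sub_sub {𝕜 E : Type*} [Field 𝕜] [AddCommGroup E]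
    [Module 𝕜 E] {A : E →ₗ.[𝕜] E} {y : A.domain} {x u : E} {h : 𝕜}
    (hh : h ≠ 0) (hy : (y : E) - h • A y = x + h • u) : A y = h⁻¹ • ((y : E) - x) - u := by
  have hAy : h • A y = (y : E) - x - h • u := by
    rw [sub_sub, ← hy]
    abel
  rw [← inv_smul_smul₀ hh (A y), hAy, smul_sub, inv_smul_smul₀ hh]

section Resolvent

variable {𝕜 E : Type*} [NontriviallyNormedField 𝕜] [NormedAddCommGroup E] [NormedSpace 𝕜 E]

theorem LinearPMap.exists_subseq_tendsto_of_isCompactOperator {A : E →ₗ.[𝕜] E} {T : E →L[𝕜] E}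
    (hT : IsCompactOperator T) {τ : 𝕜} (hTA : ∀ y : A.domain, T (y - τ • A y) = y)
    {z : ℕ → A.domain} {C₁ C₂ : ℝ} (hz : ∀ n, ‖(z n : E)‖ ≤ C₁) (hAz : ∀ n, ‖A (z n)‖ ≤ C₂) :
    ∃ a, ∃ φ : ℕ → ℕ, StrictMono φ ∧ Tendsto (fun n => (z (φ n) : E)) atTop (𝓝 a) := by
  obtain ⟨K, hK, hTK⟩ := hT.image_closedBall_subset_compact (f := T.toLinearMap) (C₁ + ‖τ‖ * C₂)
  have hzK : ∀ n, (z n : E) ∈ K := fun n => hTK ⟨_, ?_, hTA (z n)⟩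
  · obtain ⟨a, -, φ, hφ, hlim⟩ := hK.tendsto_subseq hzK
    exact ⟨a, φ, hφ, hlim⟩
  rw [mem_closedBall_zero_iff]
  calc ‖(z n : E) - τ • A (z n)‖ ≤ ‖(z n : E)‖ + ‖τ‖ * ‖A (z n)‖ :=
        (norm_sub_le _ _).trans_eq (by rw [norm_smul])
    _ ≤ C₁ + ‖τ‖ * C₂ := by gcongr <;> simp only [hz, hAz]

theorem norm_map_sub_le_of_eq_retraction {K : Set E} (hK : K.Nonempty) {T : E →L[𝕜] E}
    (hT : MapsTo T K K) {r : E → E} (hr : ∀ z, ‖z - r z‖ ≤ 2 * infDist z K) {x w : E}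
    (hx : x = r (T w)) : ‖T w - x‖ ≤ 2 * ‖T‖ * infDist w K := by
  rw [hx, mul_assoc]
  exact (hr _).trans (mul_le_mul_of_nonneg_left (T.lipschitz.infDist_map_le hK hT w) zero_le_two)

end Resolvent

theorem exists_apply_eq_neg_of_fixed_points {E : Type*} [NormedAddCommGroup E]
    [NormedSpace ℝ E] {K S : Set E} (hK : Convex ℝ K) (hSK : S ⊆ K) (hS : IsClosed S)
    (hSb : Bornology.IsBounded S) {A : E →ₗ.[ℝ] E} (hA : A.IsClosed) {T : E →L[ℝ] E}
    (hT : IsCompactOperator T) {τ : ℝ} (hTA : ∀ y : A.domain, T (y - τ • A y) = y)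
    {h : ℕ → ℝ} (hh : ∀ n, 0 < h n) (hhτ : ∀ n, h n ≤ τ) (hh0 : Tendsto h atTop (𝓝 0))
    {J : ℕ → E →L[ℝ] E} {L : ℝ} (hJL : ∀ n, ‖J n‖ ≤ L) (hJK : ∀ n, MapsTo (J n) K K)
    (hJA : ∀ n x, ∃ hx : J n x ∈ A.domain, J n x - h n • A ⟨J n x, hx⟩ = x)
    {r : E → E} (hr : ∀ z, ‖z - r z‖ ≤ 2 * infDist z K) {g : E → E} (hg : ContinuousOn g K)
    (hgK : ∀ x ∈ S, g x ∈ convexTangentCone K x) {C : ℝ} (hgC : ∀ x ∈ S, ‖g x‖ ≤ C)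
    {x : ℕ → E} (hxS : ∀ n, x n ∈ S) (hx : ∀ n, x n = r (J n (x n + h n • g (x n)))) :
    ∃ a ∈ S, ∃ ha : a ∈ A.domain, A ⟨a, ha⟩ = -g a := by
  set w : ℕ → E := fun n => x n + h n • g (x n)
  choose hdom hres using fun n => hJA n (w n)
  set y : ℕ → A.domain := fun n => ⟨J n (w n), hdom n⟩
  have hxK : ∀ n, x n ∈ K := fun n => hSK (hxS n)
  have hL : 0 ≤ L := (norm_nonneg _).trans (hJL 0)
  have hC : 0 ≤ C := (norm_nonneg _).trans (hgC _ (hxS 0))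
  have hAy : ∀ n, A (y n) = (h n)⁻¹ • ((y n : E) - x n) - g (x n) := fun n =>
    LinearPMap.apply_eq_inv_smul_sub_sub (hh n).ne' (hres n)
  have hyx : ∀ n, ‖(y n : E) - x n‖ ≤ 2 * L * infDist (w n) K := fun n =>
    (norm_map_sub_le_of_eq_retraction ⟨_, hxK 0⟩ (hJK n) hr (hx n)).trans
      (mul_le_mul_of_nonneg_right (by linarith [hJL n]) infDist_nonneg)
  have hyx' : ∀ n, ‖(y n : E) - x n‖ ≤ 2 * L * C * h n := fun n => by
    have hwK := (infDist_add_smul_le_of_mem (hxK n) (hh n).le (g (x n))).trans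
      (mul_le_mul_of_nonneg_left (hgC _ (hxS n)) (hh n).le)
    exact (hyx n).trans ((mul_le_mul_of_nonneg_left hwK (by positivity)).trans_eq (by ring))
  obtain ⟨R, hR⟩ := isBounded_iff_forall_norm_le.1 hSb
  obtain ⟨a, φ, hφ, hya⟩ := LinearPMap.exists_subseq_tendsto_of_isCompactOperator hT hTA
    (C₁ := R + 2 * L * C * τ) (C₂ := 2 * L * C + C) (z := y)
    (fun n => (norm_le_norm_add_norm_sub' _ (x n)).trans (add_le_add (hR _ (hxS n))
      ((hyx' n).trans (mul_le_mul_of_nonneg_left (hhτ n) (by positivity)))))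
    (fun n => by
      rw [hAy n]
      refine (norm_sub_le _ _).trans (add_le_add ?_ (hgC _ (hxS n)))
      rw [norm_smul, Real.norm_of_nonneg (inv_nonneg.2 (hh n).le), inv_mul_le_iff₀ (hh n)]
      linarith [hyx' n])
  have hyx0 : Tendsto (fun n => (y n : E) - x n) atTop (𝓝 0) :=
    squeeze_zero_norm hyx' (by simpa using hh0.const_mul (2 * L * C))
  have hxa : Tendsto (fun k => x (φ k)) atTop (𝓝 a) := by
    simpa using hya.sub (hyx0.comp hφ.tendsto_atTop)
  have haS : a ∈ S := hS.mem_of_tendsto hxa (Eventually.of_forall fun k => hxS _)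
  have hga : Tendsto (fun k => g (x (φ k))) atTop (𝓝 (g a)) :=
    (hg a (hSK haS)).tendsto.comp
      (tendsto_nhdsWithin_iff.2 ⟨hxa, Eventually.of_forall fun k => hxK _⟩)
  have hq : Tendsto (fun k => (h (φ k))⁻¹ • ((y (φ k) : E) - x (φ k))) atTop (𝓝 0) := by
    refine squeeze_zero_norm (fun k => ?_) (by simpa using ((hK.tendsto_inv_mul_infDist_add_smul
      (hgK a haS) (fun k => hxK (φ k)) hxa (fun k => hh _) (hh0.comp hφ.tendsto_atTop)
      hga).const_mul (2 * L)))
    rw [norm_smul, Real.norm_of_nonneg (inv_nonneg.2 (hh _).le), mul_left_comm]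
    exact mul_le_mul_of_nonneg_left (hyx _) (inv_nonneg.2 (hh _).le)
  obtain ⟨ha, hAa⟩ := hA.exists_apply_eq_of_tendsto (f := y ∘ φ) (b := -g a) hya
    (by simpa [hAy] using hq.sub hga)
  exact ⟨a, haS, ha, hAa⟩

theorem no_fixed_points_of_approximating_field_on_boundary_general
    {E : Type*} [NormedAddCommGroup E] [NormedSpace ℝ E]
    (𝓚 : Set E) (hcl : IsClosed 𝓚) (hconv : Convex ℝ 𝓚)
    (U : Set E) (hUbdd : Bornology.IsBounded U)
    (hUopen : ∃ V : Set E, IsOpen V ∧ U = V ∩ 𝓚)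
    -- the closed operator A and its compact resolvents J h
    (A : E →ₗ.[ℝ] E) (hAclosed : A.IsClosed)
    (M ω hstar : ℝ) (hM : 1 ≤ M) (hstar_pos : 0 < hstar)
    (J : ℝ → E →L[ℝ] E)
    (hJcomp : ∀ h : ℝ, 0 < h → h ≤ hstar → h * ω < 1 → IsCompactOperator (J h))
    (hJ1 : ∀ h : ℝ, 0 < h → h ≤ hstar → h * ω < 1 →
      ∀ x : E, ∃ hx : J h x ∈ A.domain, J h x - h • A ⟨J h x, hx⟩ = x)
    (hJ2 : ∀ h : ℝ, 0 < h → h ≤ hstar → h * ω < 1 →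
      ∀ y : A.domain, J h ((y : E) - h • A y) = (y : E))
    (hJinv : ∀ h : ℝ, 0 < h → h ≤ hstar → h * ω < 1 → ∀ x ∈ 𝓚, J h x ∈ 𝓚)
    (hJnorm : ∀ h : ℝ, 0 < h → h ≤ hstar → h * ω < 1 → ‖J h‖ ≤ M / (1 - h * ω))
    -- the retraction r onto 𝓚
    (r : E → E)
    (hrdist : ∀ z : E, ‖z - r z‖ ≤ 2 * Metric.infDist z 𝓚)
    -- the set-valued map G and its tangent α-approximation g
    (α : ℝ) (G : E → Set E)
    (hGbdd : ∀ B : Set E, B ⊆ 𝓚 → Bornology.IsBounded B →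
      Bornology.IsBounded (⋃ x ∈ B, G x))
    (g : E → E) (hgcont : ContinuousOn g 𝓚)
    (hgtan : ∀ x ∈ 𝓚,
      g x ∈ closure (⋃ h ∈ Set.Ioi (0:ℝ), (fun k => h⁻¹ • (k - x)) '' 𝓚))
    (hgapprox : ∀ x ∈ 𝓚, ∃ x' ∈ 𝓚, ‖x' - x‖ < α ∧
      ∃ y ∈ G x', ∃ ξ : E, ‖ξ‖ < α ∧ g x = y + ξ)
    -- nondegeneracy near the relative boundary of U in 𝓚
    (hne0 : ∀ x, ∀ hx : x ∈ A.domain, x ∈ (closure U ∩ 𝓚) \ U →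
      ∀ x' ∈ 𝓚, ‖x' - x‖ < α → ∀ y ∈ G x', ∀ ξ : E, ‖ξ‖ < α →
        A ⟨x, hx⟩ + y + ξ ≠ 0) :
    ∃ h₀ : ℝ, 0 < h₀ ∧ h₀ ≤ hstar ∧ h₀ * ω < 1 ∧
      ∀ h : ℝ, 0 < h → h ≤ h₀ → ∀ x ∈ (closure U ∩ 𝓚) \ U,
        x ≠ r (J h (x + h • g x)) := by
  obtain ⟨V, hV, hUV⟩ := hUopen
  set S := (closure U ∩ 𝓚) \ U
  have hSK : S ⊆ 𝓚 := fun x hx => hx.1.2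
  have hSb : Bornology.IsBounded S := hUbdd.closure.subset fun x hx => hx.1.1
  obtain ⟨τ, hτ, hτs, hτω⟩ := exists_pos_forall_mul_le_half hstar_pos ω
  have hadm : ∀ h, 0 < h → h ≤ τ → h ≤ hstar ∧ h * ω < 1 := fun h hh hhτ =>
    ⟨hhτ.trans hτs, (hτω h hh hhτ).trans_lt (by norm_num)⟩
  by_contra! hcon
  obtain ⟨h, hh, hh0⟩ := exists_seq_tendsto_zero_of_forall_exists_le hτ fun h₀ hh₀ hh₀τ =>
    hcon h₀ hh₀ (hadm h₀ hh₀ hh₀τ).1 (hadm h₀ hh₀ hh₀τ).2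
  choose hpos hhτ x hxS hx using hh
  have adm n := hadm (h n) (hpos n) (hhτ n)
  obtain ⟨C, hC⟩ := exists_norm_le_of_approx hGbdd hgapprox hSK hSb
  obtain ⟨a, haS, ha, hAa⟩ := exists_apply_eq_neg_of_fixed_points hconv hSK
    (isClosed_closure_inter_diff hcl hV hUV) hSb hAclosed
    (hJcomp τ hτ (hadm τ hτ le_rfl).1 (hadm τ hτ le_rfl).2)
    (hJ2 τ hτ (hadm τ hτ le_rfl).1 (hadm τ hτ le_rfl).2) hpos hhτ hh0 (J := fun n => J (h n))
    (fun n => (hJnorm _ (hpos n) (adm n).1 (adm n).2).trans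
      (div_one_sub_le_two_mul (by linarith) (hτω _ (hpos n) (hhτ n))))
    (fun n => hJinv _ (hpos n) (adm n).1 (adm n).2) (fun n => hJ1 _ (hpos n) (adm n).1 (adm n).2)
    hrdist hgcont (fun x hx => hgtan x (hSK hx)) hC hxS hx
  obtain ⟨x', hx', hxa, y, hy, ξ, hξ, hga⟩ := hgapprox a (hSK haS)
  exact hne0 a ha haS x' hx' hxa y hy ξ hξ (by rw [hAa, hga]; abel)

/-- Let `𝓚 ⊆ E` be nonempty closed convex, `U ⊆ 𝓚` bounded relatively open
with relative boundary `∂U = (cl U ∩ 𝓚) \ U`, `A` a closed partially defined linear operator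
with compact `𝓚`-invariant resolvents `J_h` satisfying `‖J_h‖ ≤ M/(1-hω)`, and let `r` be a
retraction onto `𝓚` with `‖z - r z‖ ≤ 2 d(z,𝓚)`.  If `g` is a continuous tangent
`α`-approximation of `G` and `Ax + y + ξ ≠ 0` for all `x ∈ D(A) ∩ ∂U`, `x' ∈ 𝓚` with
`‖x' - x‖ < α`, `y ∈ G(x')`, `‖ξ‖ < α`, then there is `h₀ ∈ (0, h*]`, `h₀ω < 1`, such that
`x ≠ r(J_h(x + h g(x)))` for every `h ∈ (0, h₀]` and every `x ∈ ∂U`. -/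
theorem no_fixed_points_of_approximating_field_on_boundary
    {E : Type*} [NormedAddCommGroup E] [NormedSpace ℝ E] [CompleteSpace E]
    (𝓚 : Set E) (hne : 𝓚.Nonempty) (hcl : IsClosed 𝓚) (hconv : Convex ℝ 𝓚)
    (U : Set E) (hU𝓚 : U ⊆ 𝓚) (hUbdd : Bornology.IsBounded U)
    (hUopen : ∃ V : Set E, IsOpen V ∧ U = V ∩ 𝓚)
    -- the closed operator A and its compact resolvents J h
    (A : E →ₗ.[ℝ] E) (hAclosed : A.IsClosed)
    (M ω hstar : ℝ) (hM : 1 ≤ M) (hstar_pos : 0 < hstar)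
    (J : ℝ → E →L[ℝ] E)
    (hJcomp : ∀ h : ℝ, 0 < h → h ≤ hstar → h * ω < 1 → IsCompactOperator (J h))
    (hJ1 : ∀ h : ℝ, 0 < h → h ≤ hstar → h * ω < 1 →
      ∀ x : E, ∃ hx : J h x ∈ A.domain, J h x - h • A ⟨J h x, hx⟩ = x)
    (hJ2 : ∀ h : ℝ, 0 < h → h ≤ hstar → h * ω < 1 →
      ∀ y : A.domain, J h ((y : E) - h • A y) = (y : E))
    (hJinv : ∀ h : ℝ, 0 < h → h ≤ hstar → h * ω < 1 → ∀ x ∈ 𝓚, J h x ∈ 𝓚)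
    (hJnorm : ∀ h : ℝ, 0 < h → h ≤ hstar → h * ω < 1 → ‖J h‖ ≤ M / (1 - h * ω))
    -- the retraction r onto 𝓚
    (r : E → E) (hrcont : Continuous r) (hrmem : ∀ z, r z ∈ 𝓚)
    (hrfix : ∀ z ∈ 𝓚, r z = z)
    (hrdist : ∀ z : E, ‖z - r z‖ ≤ 2 * Metric.infDist z 𝓚)
    -- the set-valued map G and its tangent α-approximation g
    (α : ℝ) (hα : 0 < α) (G : E → Set E)
    (hGbdd : ∀ B : Set E, B ⊆ 𝓚 → Bornology.IsBounded B →
      Bornology.IsBounded (⋃ x ∈ B, G x))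
    (g : E → E) (hgcont : ContinuousOn g 𝓚)
    (hgtan : ∀ x ∈ 𝓚,
      g x ∈ closure (⋃ h ∈ Set.Ioi (0:ℝ), (fun k => h⁻¹ • (k - x)) '' 𝓚))
    (hgapprox : ∀ x ∈ 𝓚, ∃ x' ∈ 𝓚, ‖x' - x‖ < α ∧
      ∃ y ∈ G x', ∃ ξ : E, ‖ξ‖ < α ∧ g x = y + ξ)
    -- nondegeneracy near the relative boundary of U in 𝓚
    (hne0 : ∀ x, ∀ hx : x ∈ A.domain, x ∈ (closure U ∩ 𝓚) \ U →
      ∀ x' ∈ 𝓚, ‖x' - x‖ < α → ∀ y ∈ G x', ∀ ξ : E, ‖ξ‖ < α →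
        A ⟨x, hx⟩ + y + ξ ≠ 0) :
    ∃ h₀ : ℝ, 0 < h₀ ∧ h₀ ≤ hstar ∧ h₀ * ω < 1 ∧
      ∀ h : ℝ, 0 < h → h ≤ h₀ → ∀ x ∈ (closure U ∩ 𝓚) \ U,
        x ≠ r (J h (x + h • g x)) :=
  no_fixed_points_of_approximating_field_on_boundary_general 𝓚 hcl hconv U hUbdd hUopen A hAclosed M
    ω hstar hM hstar_pos J hJcomp hJ1 hJ2 hJinv hJnorm r hrdist α G hGbdd g hgcont hgtan hgapprox
    hne0
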